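/- arXiv:2202.06215 — 2 statements merged into one kernel-verified Lean document; each statement's English description precedes it below -/
import Mathlib

section
/- (Asymptotics of the linear frequencies, Lemma 5.3.) (i) There exists c > 0 such that Ω_n(γ) ≥ c·n for every γ ∈ [γ₁,γ₂] and every n ∈ {1} ∪ {n̄+1, n̄+2, …}. (ii) For n ≥ n̄+1 define r(n,γ) := Ω_n(γ) − nΩ₁(γ) + 1/2, so that Ω_n(γ) = nΩ₁(γ) − 1/2 + r(n,γ). Then for every integer k ≥ 0 there exists a constant C_k such that sup over n ≥ n̄+1 and γ ∈ [γ₁,γ₂] of n·|∂_γ^k r(n,γ)| is at most C_k. -/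
open Real

/-- `Ω_γ := γ/(1+γ)²`. -/
noncomputable def OmG (γ : ℝ) : ℝ := γ / (1 + γ) ^ 2

/-- `κ_n(γ) := ((γ−1)/(γ+1))ⁿ`. -/
noncomputable def kap (n : ℕ) (γ : ℝ) : ℝ := ((γ - 1) / (γ + 1)) ^ n

/-- `μ_n^+(γ) := nΩ_γ − 1/2 + κ_n(γ)/2`. -/
noncomputable def muP (n : ℕ) (γ : ℝ) : ℝ := n * OmG γ - 1 / 2 + kap n γ / 2

/-- `μ_n^-(γ) := nΩ_γ − 1/2 − κ_n(γ)/2`. -/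
noncomputable def muM (n : ℕ) (γ : ℝ) : ℝ := n * OmG γ - 1 / 2 - kap n γ / 2

/-- `Ω_n(γ) := √(μ_n^+(γ) μ_n^-(γ))`. -/
noncomputable def Om (n : ℕ) (γ : ℝ) : ℝ := Real.sqrt (muP n γ * muM n γ)

/-!
With `a := nΩ_γ − 1/2` and `b := κ_n(γ)/2` one has `μ_n^± = a ± b`, so
`Ω_n = √(a² − b²)` and `r(n,γ) = √(a² − b²) − a`. Since `μ_n^-(γ)/n` is nondecreasing in `n`,
compactness gives `μ_n^- ≥ c n` on `[γ₁,γ₂]` for `n ≥ n̄+1`, hence `Ω_n ≥ μ_n^- ≥ c n`.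

For (ii), `a` and `b` extend holomorphically to the right half-plane, where both are
`n`-Lipschitz. On the disc of radius `c/4` around `γ` one therefore keeps `|b| < Re a` and
`|a| ≳ n`, and the extension `a (√(1 − (b/a)²) − 1)` of `r` is bounded by
`|b|²/|a| = O(1/n)`. Cauchy's estimates on that disc bound every `γ`-derivative of `r` by
`C_k / n`.
-/

open scoped Nat

lemma OmG_nonneg {γ : ℝ} (hγ : 0 ≤ γ) : 0 ≤ OmG γ := by
  unfold OmG; positivity

lemma OmG_le_one_div_four (γ : ℝ) : OmG γ ≤ 1 / 4 := by
  unfold OmG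
  rcases eq_or_ne (1 + γ) 0 with h | h
  · simp [h]
  · rw [div_le_iff₀ (by positivity)]
    nlinarith [sq_nonneg (1 - γ)]

lemma kap_nonneg {γ : ℝ} (hγ : 1 ≤ γ) (n : ℕ) : 0 ≤ kap n γ :=
  pow_nonneg (div_nonneg (by linarith) (by linarith)) n

lemma kap_antitone {γ : ℝ} (hγ : 1 ≤ γ) : Antitone (kap · γ) := fun _ _ hmn =>
  pow_le_pow_of_le_one (div_nonneg (by linarith) (by linarith))
    ((div_le_one (by linarith)).2 (by linarith)) hmn

lemma Om_one {γ : ℝ} (hγ : 0 ≤ γ) : Om 1 γ = OmG γ := by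
  have : muP 1 γ * muM 1 γ = OmG γ ^ 2 := by
    simp only [muP, muM, kap, OmG, Nat.cast_one, pow_one, one_mul]
    field_simp
    ring
  rw [Om, this, Real.sqrt_sq (OmG_nonneg hγ)]

lemma muM_le_Om {n : ℕ} {γ : ℝ} (hγ : 1 ≤ γ) (hμ : 0 ≤ muM n γ) : muM n γ ≤ Om n γ := by
  have : muM n γ ≤ muP n γ := by
    simp only [muM, muP]; linarith [kap_nonneg hγ n]
  exact Real.le_sqrt_of_sq_le (by nlinarith)

lemma muM_lt_mul_OmG {γ : ℝ} (hγ : 1 ≤ γ) (n : ℕ) : muM n γ < n * OmG γ := by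
  simp only [muM]; linarith [kap_nonneg hγ n]

lemma mul_muM_le_mul_muM {γ : ℝ} (hγ : 1 ≤ γ) {m n : ℕ} (hmn : m ≤ n) :
    n * muM m γ ≤ m * muM n γ := by
  have hmn' : (m : ℝ) ≤ n := by exact_mod_cast hmn
  have := kap_antitone hγ hmn
  simp only [muM]
  nlinarith [kap_nonneg hγ n, m.cast_nonneg (α := ℝ)]

lemma continuousOn_muM (n : ℕ) : ContinuousOn (muM n) (Set.Ici 1) := by
  unfold muM OmG kap
  fun_prop (disch := intro x hx; simp only [Set.mem_Ici] at hx; positivity)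

lemma exists_pos_mul_le_muM {nbar : ℕ} {γ₁ γ₂ : ℝ} (hγ₁ : 1 ≤ γ₁) (hγ₁₂ : γ₁ ≤ γ₂)
    (hmu : ∀ γ ∈ Set.Icc γ₁ γ₂, 0 < muM (nbar + 1) γ) :
    ∃ c : ℝ, 0 < c ∧ ∀ γ ∈ Set.Icc γ₁ γ₂, ∀ n : ℕ, nbar + 1 ≤ n → c * n ≤ muM n γ := by
  obtain ⟨γ₀, hγ₀, hmin⟩ := isCompact_Icc.exists_isMinOn (Set.nonempty_Icc.2 hγ₁₂)
    ((continuousOn_muM (nbar + 1)).mono fun γ hγ => hγ₁.trans hγ.1)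
  refine ⟨muM (nbar + 1) γ₀ / (nbar + 1 : ℕ), div_pos (hmu γ₀ hγ₀) (by positivity),
    fun γ hγ n hn => ?_⟩
  have hmono := mul_muM_le_mul_muM (hγ₁.trans hγ.1) hn
  rw [div_mul_eq_mul_div, div_le_iff₀ (by positivity)]
  nlinarith [isMinOn_iff.1 hmin γ hγ, (n.cast_nonneg : (0 : ℝ) ≤ n)]

lemma norm_pow_sub_pow_le {R : Type*} [SeminormedRing R] [NormOneClass R] {x y : R}
    (hx : ‖x‖ ≤ 1) (hy : ‖y‖ ≤ 1) (n : ℕ) : ‖x ^ n - y ^ n‖ ≤ n * ‖x - y‖ := by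
  induction n with
  | zero => simp
  | succ n ih =>
    have hxn : ‖x ^ n‖ ≤ 1 := (norm_pow_le x n).trans (pow_le_one₀ (norm_nonneg _) hx)
    calc ‖x ^ (n + 1) - y ^ (n + 1)‖ = ‖x ^ n * (x - y) + (x ^ n - y ^ n) * y‖ := by
          congr 1; noncomm_ring
      _ ≤ ‖x ^ n‖ * ‖x - y‖ + ‖x ^ n - y ^ n‖ * ‖y‖ :=
          (norm_add_le _ _).trans (add_le_add (norm_mul_le _ _) (norm_mul_le _ _))
      _ ≤ 1 * ‖x - y‖ + (n * ‖x - y‖) * 1 := by gcongr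
      _ = (n + 1 : ℕ) * ‖x - y‖ := by push_cast; ring

lemma norm_cpow_inv_two_sub_one_le (w : ℂ) : ‖(1 - w) ^ (2⁻¹ : ℂ) - 1‖ ≤ ‖w‖ := by
  set s := (1 - w) ^ (2⁻¹ : ℂ)
  -- the principal square root lies in the closed right half-plane
  have hs : 1 ≤ ‖s + 1‖ := by
    refine le_trans ?_ (Complex.re_le_norm _)
    simp only [Complex.add_re, Complex.one_re, s, Complex.cpow_inv_two_re]
    linarith [Real.sqrt_nonneg ((‖1 - w‖ + (1 - w).re) / 2)]
  have hprod : (s - 1) * (s + 1) = -w := by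
    linear_combination Complex.cpow_ofNat_inv_pow (1 - w) 2
  calc ‖s - 1‖ ≤ ‖s - 1‖ * ‖s + 1‖ := le_mul_of_one_le_right (norm_nonneg _) hs
    _ = ‖w‖ := by rw [← norm_mul, hprod, norm_neg]

lemma norm_mul_cpow_inv_two_sub_one_le (a b : ℂ) :
    ‖a * ((1 - (b / a) ^ 2) ^ (2⁻¹ : ℂ) - 1)‖ ≤ ‖b‖ ^ 2 / ‖a‖ := by
  rcases eq_or_ne a 0 with rfl | ha
  · simp
  calc ‖a * ((1 - (b / a) ^ 2) ^ (2⁻¹ : ℂ) - 1)‖ ≤ ‖a‖ * ‖(b / a) ^ 2‖ := by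
        rw [norm_mul]; gcongr; exact norm_cpow_inv_two_sub_one_le _
    _ = ‖b‖ ^ 2 / ‖a‖ := by
        rw [norm_pow, norm_div]; field_simp

lemma ofReal_sqrt_sq_sub_sq_sub (a b : ℝ) (ha : 0 < a) (hb : |b| ≤ a) :
    ((√(a ^ 2 - b ^ 2) - a : ℝ) : ℂ) = a * ((1 - ((b : ℂ) / a) ^ 2) ^ (2⁻¹ : ℂ) - 1) := by
  have h1 : 0 ≤ 1 - (b / a) ^ 2 := by
    rw [sub_nonneg, div_pow, div_le_one (by positivity), ← sq_abs b]
    exact pow_le_pow_left₀ (abs_nonneg b) hb 2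
  have h2 : √(a ^ 2 - b ^ 2) = a * √(1 - (b / a) ^ 2) := by
    rw [← Real.sqrt_sq ha.le, ← Real.sqrt_mul (sq_nonneg a), Real.sqrt_sq ha.le]
    congr 1; field_simp
  rw [h2, Complex.ofReal_sub, Complex.ofReal_mul, Real.sqrt_eq_rpow, Complex.ofReal_cpow h1]
  push_cast
  ring_nf

lemma iteratedDeriv_eq_re_of_analyticOnNhd {f : ℂ → ℂ} {g : ℝ → ℝ} {U : Set ℂ}
    (hU : IsOpen U) (hf : AnalyticOnNhd ℂ f U) (hfg : ∀ x : ℝ, (x : ℂ) ∈ U → g x = (f x).re)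
    (k : ℕ) :
    ∀ x : ℝ, (x : ℂ) ∈ U → iteratedDeriv k g x = (iteratedDeriv k f x).re := by
  induction k with
  | zero => simpa using hfg
  | succ k ih =>
    intro x hx
    have hnhds : Complex.ofReal ⁻¹' U ∈ nhds x :=
      Complex.continuous_ofReal.continuousAt.preimage_mem_nhds (hU.mem_nhds hx)
    rw [iteratedDeriv_succ, iteratedDeriv_succ, (Filter.eventuallyEq_of_mem hnhds ih).deriv_eq,
      iteratedDeriv_eq_iterate]
    exact ((hf.iterated_deriv k x hx).differentiableAt.hasDerivAt.real_of_complex).deriv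

lemma one_le_norm_one_add {z : ℂ} (hz : 0 ≤ z.re) : 1 ≤ ‖1 + z‖ :=
  le_trans (by simpa using hz) (Complex.re_le_norm (1 + z))

lemma one_add_ne_zero_of_re_nonneg {z : ℂ} (hz : 0 ≤ z.re) : 1 + z ≠ 0 :=
  norm_pos_iff.1 (zero_lt_one.trans_le (one_le_norm_one_add hz))

lemma one_add_sq_norm_le_sq_norm_one_add {z : ℂ} (hz : 0 ≤ z.re) :
    1 + ‖z‖ ^ 2 ≤ ‖1 + z‖ ^ 2 := by
  rw [Complex.sq_norm, Complex.sq_norm, Complex.normSq_apply, Complex.normSq_apply]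
  simp only [Complex.add_re, Complex.one_re, Complex.add_im, Complex.one_im]
  nlinarith

lemma norm_mobius_le_one {z : ℂ} (hz : 0 ≤ z.re) : ‖(z - 1) / (z + 1)‖ ≤ 1 := by
  rw [norm_div, div_le_one (norm_pos_iff.2 (add_comm 1 z ▸ one_add_ne_zero_of_re_nonneg hz)),
    ← sq_le_sq₀ (norm_nonneg _) (norm_nonneg _), Complex.sq_norm, Complex.sq_norm,
    Complex.normSq_apply, Complex.normSq_apply]
  simp only [Complex.sub_re, Complex.add_re, Complex.one_re, Complex.sub_im, Complex.add_im,
    Complex.one_im]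
  nlinarith

lemma norm_mobius_sub_le {z w : ℂ} (hz : 0 ≤ z.re) (hw : 0 ≤ w.re) :
    ‖(z - 1) / (z + 1) - (w - 1) / (w + 1)‖ ≤ 2 * ‖z - w‖ := by
  have hz1 : 1 ≤ ‖z + 1‖ := by rw [add_comm]; exact one_le_norm_one_add hz
  have hw1 : 1 ≤ ‖w + 1‖ := by rw [add_comm]; exact one_le_norm_one_add hw
  have key : (z - 1) / (z + 1) - (w - 1) / (w + 1) = 2 * (z - w) / ((z + 1) * (w + 1)) := by
    have : z + 1 ≠ 0 := add_comm 1 z ▸ one_add_ne_zero_of_re_nonneg hz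
    have : w + 1 ≠ 0 := add_comm 1 w ▸ one_add_ne_zero_of_re_nonneg hw
    field_simp; ring
  rw [key, norm_div, norm_mul, norm_mul, Complex.norm_two]
  exact div_le_self (by positivity) (one_le_mul_of_one_le_of_one_le hz1 hw1)

noncomputable def freqRemainder (n : ℕ) (γ : ℝ) : ℝ := Om n γ - n * Om 1 γ + 1 / 2

noncomputable def OmGC (z : ℂ) : ℂ := z / (1 + z) ^ 2

noncomputable def kapC (n : ℕ) (z : ℂ) : ℂ := ((z - 1) / (z + 1)) ^ n

noncomputable def muMidC (n : ℕ) (z : ℂ) : ℂ := n * OmGC z - 1 / 2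

-- `√(a² − b²) − a` written as `a (√(1 − (b/a)²) − 1)`: the principal square root is then
-- only taken near `1`, away from its branch cut.
noncomputable def remC (n : ℕ) (z : ℂ) : ℂ :=
  muMidC n z * ((1 - (kapC n z / 2 / muMidC n z) ^ 2) ^ (2⁻¹ : ℂ) - 1)

lemma norm_OmGC_sub_le {z w : ℂ} (hz : 0 ≤ z.re) (hw : 0 ≤ w.re) :
    ‖OmGC z - OmGC w‖ ≤ ‖z - w‖ := by
  have hz1 := one_le_norm_one_add hz
  have hw1 := one_le_norm_one_add hw
  have hz0 := one_add_ne_zero_of_re_nonneg hz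
  have hw0 := one_add_ne_zero_of_re_nonneg hw
  have hnum : ‖1 - w * z‖ ≤ ‖1 + z‖ ^ 2 * ‖1 + w‖ ^ 2 := by
    have hz2 := one_add_sq_norm_le_sq_norm_one_add hz
    have hw2 := one_add_sq_norm_le_sq_norm_one_add hw
    have h1 : ‖1 - w * z‖ ≤ 1 + ‖w‖ * ‖z‖ := by
      simpa using norm_sub_le (1 : ℂ) (w * z)
    -- Cauchy–Schwarz: `(1 + ‖w‖‖z‖)² ≤ (1 + ‖w‖²)(1 + ‖z‖²)`
    have h2 : 1 + ‖w‖ * ‖z‖ ≤ ‖1 + z‖ * ‖1 + w‖ := by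
      nlinarith [sq_nonneg (‖w‖ - ‖z‖), norm_nonneg w, norm_nonneg z,
        mul_nonneg (norm_nonneg (1 + z)) (norm_nonneg (1 + w))]
    nlinarith [mul_le_mul hz1 hw1 zero_le_one (by linarith)]
  have key : OmGC z - OmGC w = (z - w) * (1 - w * z) / ((1 + z) ^ 2 * (1 + w) ^ 2) := by
    unfold OmGC; field_simp; ring
  rw [key, norm_div, norm_mul, norm_mul, norm_pow, norm_pow]
  exact div_le_of_le_mul₀ (by positivity) (norm_nonneg _) (by gcongr)

lemma norm_kapC_sub_le (n : ℕ) {z w : ℂ} (hz : 0 ≤ z.re) (hw : 0 ≤ w.re) :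
    ‖kapC n z - kapC n w‖ ≤ 2 * n * ‖z - w‖ := by
  unfold kapC
  calc _ ≤ n * ‖(z - 1) / (z + 1) - (w - 1) / (w + 1)‖ :=
        norm_pow_sub_pow_le (norm_mobius_le_one hz) (norm_mobius_le_one hw) n
    _ ≤ n * (2 * ‖z - w‖) := by gcongr; exact norm_mobius_sub_le hz hw
    _ = 2 * n * ‖z - w‖ := by ring

lemma norm_kapC_le_one (n : ℕ) {z : ℂ} (hz : 0 ≤ z.re) : ‖kapC n z‖ ≤ 1 := by
  rw [kapC, norm_pow]; exact pow_le_one₀ (norm_nonneg _) (norm_mobius_le_one hz)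

lemma OmGC_ofReal (x : ℝ) : OmGC x = OmG x := by
  simp [OmGC, OmG]

lemma kapC_ofReal (n : ℕ) (x : ℝ) : kapC n x = kap n x := by
  simp [kapC, kap]

lemma muMidC_ofReal (n : ℕ) (x : ℝ) : muMidC n x = ((n * OmG x - 1 / 2 : ℝ) : ℂ) := by
  simp [muMidC, OmGC_ofReal]

lemma norm_remC_le (n : ℕ) (z : ℂ) :
    ‖remC n z‖ ≤ ‖kapC n z / 2‖ ^ 2 / ‖muMidC n z‖ :=
  norm_mul_cpow_inv_two_sub_one_le _ _

lemma differentiableAt_remC {n : ℕ} {z : ℂ} (hz : 0 ≤ z.re)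
    (h : ‖kapC n z / 2‖ < (muMidC n z).re) : DifferentiableAt ℂ (remC n) z := by
  have hz0 := one_add_ne_zero_of_re_nonneg hz
  have hmid : muMidC n z ≠ 0 := fun h0 => by
    rw [h0, Complex.zero_re] at h; linarith [norm_nonneg (kapC n z / 2)]
  have hslit : 1 - (kapC n z / 2 / muMidC n z) ^ 2 ∈ Complex.slitPlane := by
    have hlt : ‖(kapC n z / 2 / muMidC n z) ^ 2‖ < 1 := by
      rw [norm_pow, norm_div]
      exact pow_lt_one₀ (by positivity)
        ((div_lt_one (norm_pos_iff.2 hmid)).2 (h.trans_le (Complex.re_le_norm _))) two_ne_zero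
    refine Complex.mem_slitPlane_iff.2 (Or.inl ?_)
    rw [Complex.sub_re, Complex.one_re]
    linarith [Complex.re_le_norm ((kapC n z / 2 / muMidC n z) ^ 2)]
  have hkap : DifferentiableAt ℂ (kapC n) z := by
    unfold kapC
    fun_prop (disch := rwa [add_comm])
  have hmidd : DifferentiableAt ℂ (muMidC n) z := by
    unfold muMidC OmGC
    fun_prop (disch := exact pow_ne_zero 2 hz0)
  exact hmidd.mul (((((hkap.div_const 2).div hmidd hmid).pow 2).const_sub 1).cpow_const hslit
    |>.sub_const 1)

lemma remC_ofReal {n : ℕ} {x : ℝ} (hx : 0 ≤ x) (h : ‖kapC n x / 2‖ < (muMidC n x).re) :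
    remC n x = freqRemainder n x := by
  set a := n * OmG x - 1 / 2
  set b := kap n x / 2
  have hkb : kapC n x / 2 = (b : ℂ) := by simp [b, kapC_ofReal]
  rw [hkb, muMidC_ofReal, Complex.ofReal_re, Complex.norm_real, Real.norm_eq_abs] at h
  have hOm : Om n x = √(a ^ 2 - b ^ 2) := by
    rw [Om]; congr 1; simp only [muP, muM, a, b]; ring
  rw [remC, hkb, muMidC_ofReal,
    ← ofReal_sqrt_sq_sub_sq_sub a b ((abs_nonneg b).trans_lt h) h.le, freqRemainder, hOm, Om_one hx]
  congr 1; ring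

section NearReal

variable {n : ℕ} {γ ρ : ℝ}

lemma le_one_of_mul_le_muM (hγ : 1 ≤ γ) (hρ : 4 * n * ρ ≤ muM n γ) : ρ ≤ 1 := by
  have h1 := muM_lt_mul_OmG hγ n
  have h2 := OmG_le_one_div_four γ
  nlinarith [n.cast_nonneg (α := ℝ)]

lemma pos_of_mul_le_muM (hγ : 1 ≤ γ) (hρ : 4 * n * ρ ≤ muM n γ) : 0 < n := by
  by_contra! h
  obtain rfl := Nat.le_zero.1 h
  have := muM_lt_mul_OmG hγ 0
  simp only [Nat.cast_zero, zero_mul] at hρ this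
  linarith

lemma re_nonneg_of_norm_sub_ofReal_le {z : ℂ} (hγ : 1 ≤ γ) (hρ : ρ ≤ 1)
    (hz : ‖z - γ‖ ≤ ρ) : 0 ≤ z.re := by
  have := (Complex.abs_re_le_norm (z - γ)).trans hz
  rw [Complex.sub_re, Complex.ofReal_re, abs_le] at this
  linarith

lemma norm_kapC_div_two_add_le_re_muMidC {z : ℂ} (hγ : 1 ≤ γ)
    (hρ : 4 * n * ρ ≤ muM n γ) (hz : ‖z - γ‖ ≤ ρ) :
    ‖kapC n z / 2‖ + 2 * n * ρ ≤ (muMidC n z).re := by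
  have hzre := re_nonneg_of_norm_sub_ofReal_le hγ (le_one_of_mul_le_muM hγ hρ) hz
  have hγre : 0 ≤ (γ : ℂ).re := by simp; linarith
  have hkap : ‖kapC n z‖ ≤ kap n γ + 2 * n * ρ := by
    have := norm_kapC_sub_le n hzre hγre
    rw [kapC_ofReal] at this
    have h := norm_le_norm_add_norm_sub' (kapC n z) (kap n γ : ℂ)
    rw [Complex.norm_real, Real.norm_of_nonneg (kap_nonneg hγ n)] at h
    nlinarith [n.cast_nonneg (α := ℝ)]
  have hmid : (n * OmG γ - 1 / 2) - n * ρ ≤ (muMidC n z).re := by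
    have h1 : ‖muMidC n z - muMidC n γ‖ ≤ n * ρ := by
      rw [show muMidC n z - muMidC n γ = n * (OmGC z - OmGC γ) by unfold muMidC; ring,
        norm_mul, Complex.norm_natCast]
      exact mul_le_mul_of_nonneg_left ((norm_OmGC_sub_le hzre hγre).trans hz) n.cast_nonneg
    have h2 := (Complex.abs_re_le_norm _).trans h1
    rw [Complex.sub_re, muMidC_ofReal, Complex.ofReal_re, abs_le] at h2
    linarith
  rw [norm_div, Complex.norm_two]
  simp only [muM] at hρ
  linarith

lemma differentiableOn_remC_closedBall (hγ : 1 ≤ γ) (hρ0 : 0 < ρ)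
    (hρ : 4 * n * ρ ≤ muM n γ) : DifferentiableOn ℂ (remC n) (Metric.closedBall (γ : ℂ) ρ) := by
  intro z hz
  rw [Metric.mem_closedBall, dist_eq_norm] at hz
  have hn : (0 : ℝ) < n := Nat.cast_pos.2 (pos_of_mul_le_muM hγ hρ)
  have h := norm_kapC_div_two_add_le_re_muMidC hγ hρ hz
  refine (differentiableAt_remC ?_ (by nlinarith)).differentiableWithinAt
  exact re_nonneg_of_norm_sub_ofReal_le hγ (le_one_of_mul_le_muM hγ hρ) hz

lemma norm_remC_le_of_mem_closedBall (hγ : 1 ≤ γ) (hρ0 : 0 < ρ)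
    (hρ : 4 * n * ρ ≤ muM n γ) {z : ℂ} (hz : ‖z - γ‖ ≤ ρ) : ‖remC n z‖ ≤ 1 / (8 * n * ρ) := by
  have hn : (0 : ℝ) < n := Nat.cast_pos.2 (pos_of_mul_le_muM hγ hρ)
  have hre := norm_kapC_div_two_add_le_re_muMidC hγ hρ hz
  have hmid : 2 * n * ρ ≤ ‖muMidC n z‖ :=
    (by linarith [norm_nonneg (kapC n z / 2)] : 2 * n * ρ ≤ _).trans (Complex.re_le_norm _)
  have hkap : ‖kapC n z / 2‖ ≤ 1 / 2 := by
    rw [norm_div, Complex.norm_two]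
    linarith [norm_kapC_le_one n
      (re_nonneg_of_norm_sub_ofReal_le hγ (le_one_of_mul_le_muM hγ hρ) hz)]
  calc ‖remC n z‖ ≤ ‖kapC n z / 2‖ ^ 2 / ‖muMidC n z‖ := norm_remC_le n z
    _ ≤ (1 / 2) ^ 2 / (2 * n * ρ) := by gcongr
    _ = 1 / (8 * n * ρ) := by ring

lemma freqRemainder_eq_re_remC (hγ : 1 ≤ γ) (hρ : 4 * n * ρ ≤ muM n γ) {x : ℝ}
    (hx : (x : ℂ) ∈ Metric.ball (γ : ℂ) ρ) : freqRemainder n x = (remC n x).re := by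
  rw [Metric.mem_ball, dist_eq_norm] at hx
  have hn : (0 : ℝ) < n := Nat.cast_pos.2 (pos_of_mul_le_muM hγ hρ)
  have h := norm_kapC_div_two_add_le_re_muMidC hγ hρ hx.le
  have hρ0 : 0 < ρ := (norm_nonneg _).trans_lt hx
  have hx0 := re_nonneg_of_norm_sub_ofReal_le hγ (le_one_of_mul_le_muM hγ hρ) hx.le
  rw [Complex.ofReal_re] at hx0
  rw [remC_ofReal hx0 (by nlinarith), Complex.ofReal_re]

lemma norm_mul_iteratedDeriv_freqRemainder_le (hγ : 1 ≤ γ) (hρ0 : 0 < ρ)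
    (hρ : 4 * n * ρ ≤ muM n γ) (k : ℕ) :
    n * |iteratedDeriv k (freqRemainder n) γ| ≤ k ! / (8 * ρ ^ (k + 1)) := by
  have hdiff := differentiableOn_remC_closedBall hγ hρ0 hρ
  have hanalytic : AnalyticOnNhd ℂ (remC n) (Metric.ball (γ : ℂ) ρ) :=
    (hdiff.mono Metric.ball_subset_closedBall).analyticOnNhd Metric.isOpen_ball
  have hreal := iteratedDeriv_eq_re_of_analyticOnNhd Metric.isOpen_ball hanalytic
    (fun x hx => freqRemainder_eq_re_remC hγ hρ hx) k γ (Metric.mem_ball_self hρ0)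
  have hcauchy := Complex.norm_iteratedDeriv_le_of_forall_mem_sphere_norm_le k hρ0
    (hdiff.diffContOnCl_ball subset_rfl)
    (fun z hz => norm_remC_le_of_mem_closedBall hγ hρ0 hρ (mem_sphere_iff_norm.1 hz).le)
  have hn : (0 : ℝ) < n := Nat.cast_pos.2 (pos_of_mul_le_muM hγ hρ)
  calc n * |iteratedDeriv k (freqRemainder n) γ| ≤ n * ‖iteratedDeriv k (remC n) γ‖ := by
        rw [hreal]; gcongr; exact Complex.abs_re_le_norm _
    _ ≤ n * (k ! * (1 / (8 * n * ρ)) / ρ ^ k) := by gcongr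
    _ = k ! / (8 * ρ ^ (k + 1)) := by field_simp; ring

end NearReal

theorem asymptotics_general
    (nbar : ℕ)
    (γ₁ γ₂ : ℝ) (hγ₁ : 1 < γ₁) (hγ₁₂ : γ₁ ≤ γ₂)
    (hmu : ∀ γ ∈ Set.Icc γ₁ γ₂, 0 < muM (nbar + 1) γ) :
    -- (i)
    (∃ c : ℝ, 0 < c ∧ ∀ γ ∈ Set.Icc γ₁ γ₂, ∀ n : ℕ,
      (n = 1 ∨ nbar + 1 ≤ n) → c * n ≤ Om n γ) ∧
    -- (ii)
    (∀ k : ℕ, ∃ C : ℝ, ∀ n : ℕ, nbar + 1 ≤ n → ∀ γ ∈ Set.Icc γ₁ γ₂,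
      (n : ℝ) * |iteratedDeriv k (fun x => Om n x - n * Om 1 x + 1 / 2) γ| ≤ C) := by
  obtain ⟨c, hc, hgrowth⟩ := exists_pos_mul_le_muM hγ₁.le hγ₁₂ hmu
  refine ⟨⟨c, hc, ?_⟩, fun k => ⟨k ! / (8 * (c / 4) ^ (k + 1)), fun n hn γ hγ => ?_⟩⟩
  · rintro γ hγ n (rfl | hn)
    · have h1 := hgrowth γ hγ _ le_rfl
      have h2 := muM_lt_mul_OmG (hγ₁.trans_le hγ.1).le (nbar + 1)
      rw [Nat.cast_one, mul_one, Om_one (by linarith [hγ.1])]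
      nlinarith
    · have h := hgrowth γ hγ n hn
      exact h.trans (muM_le_Om (hγ₁.trans_le hγ.1).le ((by positivity : 0 ≤ c * n).trans h))
  · exact norm_mul_iteratedDeriv_freqRemainder_le (hγ₁.trans_le hγ.1).le (by positivity)
      (by linarith [hgrowth γ hγ n hn]) k

/-- Asymptotics of the linear frequencies (Lemma 5.3).  Here
`r(n,γ) := Ω_n(γ) − n Ω₁(γ) + 1/2`, written inline. -/
theorem asymptotics
    (nbar : ℕ) (hnbar : 2 ≤ nbar)
    (γ₁ γ₂ : ℝ) (hγ₁ : 1 < γ₁) (hγ₁₂ : γ₁ ≤ γ₂)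
    (hmu : ∀ γ ∈ Set.Icc γ₁ γ₂, 0 < muM (nbar + 1) γ) :
    -- (i)
    (∃ c : ℝ, 0 < c ∧ ∀ γ ∈ Set.Icc γ₁ γ₂, ∀ n : ℕ,
      (n = 1 ∨ nbar + 1 ≤ n) → c * n ≤ Om n γ) ∧
    -- (ii)
    (∀ k : ℕ, ∃ C : ℝ, ∀ n : ℕ, nbar + 1 ≤ n → ∀ γ ∈ Set.Icc γ₁ γ₂,
      (n : ℝ) * |iteratedDeriv k (fun x => Om n x - n * Om 1 x + 1 / 2) γ| ≤ C) :=
  asymptotics_general nbar γ₁ γ₂ hγ₁ hγ₁₂ hmu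
end

section
/- (Symplectic rectification of the quadratic angular momentum, Lemma 6.1, part 2.) Let γ ≥ 1 and let β(θ) := ∫₀^θ (1/g_γ(s) − 1) ds. Then the map θ ↦ θ + β(θ) is a strictly increasing C^∞ diffeomorphism of ℝ satisfying (θ+2π) + β(θ+2π) = θ + β(θ) + 2π, and for every continuous 2π-periodic function q: ℝ → ℝ one has ∫₀^{2π} q(θ+β(θ))² · (1+β'(θ))² · g_γ(θ) dθ = ∫₀^{2π} q(y)² dy. -/
open Real MeasureTheory

/-! Since `d/dθ arctan (γ⁻¹ tan θ) = 1 / g_γ(θ)`, `θ + β(θ)` is the continuous lift of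
`arctan (γ⁻¹ tan θ)`. Subtracting `θ` by the tangent subtraction formula gives the globally valid
closed form `β = arctan ((γ⁻¹ - 1) sin θ cos θ / (cos² θ + γ⁻¹ sin² θ))`, which is smooth,
`2π`-periodic and bounded by `π/2`. Hence `θ ↦ θ + β(θ)` is a smooth lift of a circle
diffeomorphism with derivative `1/g_γ > 0` fixing `0` and `2π`, and the identity for `q` is
the change of variables `y = θ + β(θ)`, because `(1 + β')² g_γ = 1 + β'`. -/

/-- `g_γ(θ) := γ cos²θ + γ⁻¹ sin²θ`. -/
noncomputable def gell (γ θ : ℝ) : ℝ := γ * Real.cos θ ^ 2 + γ⁻¹ * Real.sin θ ^ 2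

/-- `β(θ) := ∫₀^θ (1/g_γ(s) − 1) ds`. -/
noncomputable def betaStr (γ θ : ℝ) : ℝ := ∫ s in (0:ℝ)..θ, (1 / gell γ s - 1)

lemma mul_cos_sq_add_mul_sin_sq_pos {a b : ℝ} (ha : 0 < a) (hb : 0 < b) (θ : ℝ) :
    0 < a * cos θ ^ 2 + b * sin θ ^ 2 := by
  nlinarith [sin_sq_add_cos_sq θ, min_le_left a b, min_le_right a b, lt_min ha hb,
    sq_nonneg (sin θ), sq_nonneg (cos θ)]

lemma gell_pos {γ : ℝ} (hγ : 0 < γ) (θ : ℝ) : 0 < gell γ θ :=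
  mul_cos_sq_add_mul_sin_sq_pos hγ (inv_pos.2 hγ) θ

lemma continuous_one_div_gell {γ : ℝ} (hγ : 0 < γ) : Continuous fun θ => 1 / gell γ θ :=
  continuous_const.div (by unfold gell; fun_prop) fun θ => (gell_pos hγ θ).ne'

lemma surjective_of_continuous_of_abs_sub_le {f : ℝ → ℝ} (hf : Continuous f) {C : ℝ}
    (hC : ∀ x, |f x - x| ≤ C) : Function.Surjective f := by
  refine hf.surjective ?_ ?_
  · refine Filter.tendsto_atTop_mono (fun x => ?_)
      (Filter.tendsto_atTop_add_const_right _ (-C) (f := fun x => x) Filter.tendsto_id)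
    linarith [(abs_le.1 (hC x)).1]
  · refine Filter.tendsto_atBot_mono (fun x => ?_)
      (Filter.tendsto_atBot_add_const_right _ C (f := fun x => x) Filter.tendsto_id)
    linarith [(abs_le.1 (hC x)).2]

noncomputable def betaArctan (γ θ : ℝ) : ℝ :=
  arctan ((γ⁻¹ - 1) * (sin θ * cos θ) / (cos θ ^ 2 + γ⁻¹ * sin θ ^ 2))

lemma hasDerivAt_betaArctan {γ : ℝ} (hγ : 0 < γ) (θ : ℝ) :
    HasDerivAt (betaArctan γ) (1 / gell γ θ - 1) θ := by
  have hD : 0 < cos θ ^ 2 + γ⁻¹ * sin θ ^ 2 := by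
    simpa using mul_cos_sq_add_mul_sin_sq_pos one_pos (inv_pos.2 hγ) θ
  have hg : 0 < gell γ θ := gell_pos hγ θ
  have hN := ((hasDerivAt_sin θ).fun_mul (hasDerivAt_cos θ)).const_mul (γ⁻¹ - 1)
  have hDen := ((hasDerivAt_cos θ).fun_pow 2).fun_add
    (((hasDerivAt_sin θ).fun_pow 2).const_mul γ⁻¹)
  refine (hN.fun_div hDen hD.ne').arctan.congr_deriv ?_
  have h : sin θ ^ 2 + cos θ ^ 2 = 1 := sin_sq_add_cos_sq θ
  have hγt : γ * γ⁻¹ = 1 := mul_inv_cancel₀ hγ.ne'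
  have ht : γ⁻¹ ≠ 0 := inv_ne_zero hγ.ne'
  unfold gell at hg ⊢
  generalize cos θ = c, sin θ = s, γ⁻¹ = t at *
  have hsum : (c ^ 2 + t * s ^ 2) ^ 2 + ((t - 1) * (s * c)) ^ 2 =
      t * (γ * c ^ 2 + t * s ^ 2) := by
    linear_combination (c ^ 2 + t ^ 2 * s ^ 2) * h - c ^ 2 * hγt
  calc _ = (t - 1) * ((c ^ 2 - s ^ 2) * (c ^ 2 + t * s ^ 2) - 2 * (t - 1) * (s * c) ^ 2) /
          ((c ^ 2 + t * s ^ 2) ^ 2 + ((t - 1) * (s * c)) ^ 2) := by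
        field_simp; ring
    _ = (t - 1) * (c ^ 2 - t * s ^ 2) / (t * (γ * c ^ 2 + t * s ^ 2)) := by
        rw [hsum]; congr 1; linear_combination (t - 1) * (c ^ 2 - t * s ^ 2) * h
    _ = 1 / (γ * c ^ 2 + t * s ^ 2) - 1 := by
        rw [eq_sub_iff_add_eq, div_add_one (mul_ne_zero ht hg.ne'),
          div_eq_div_iff (mul_ne_zero ht hg.ne') hg.ne']
        linear_combination (γ * c ^ 2 + t * s ^ 2) * (t * h + c ^ 2 * hγt)

lemma contDiff_betaArctan {γ : ℝ} (hγ : 0 < γ) : ContDiff ℝ (⊤ : ℕ∞) (betaArctan γ) := by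
  refine contDiff_arctan.comp (ContDiff.div (by fun_prop) (by fun_prop) fun θ => ?_)
  simpa using (mul_cos_sq_add_mul_sin_sq_pos one_pos (inv_pos.2 hγ) θ).ne'

lemma betaArctan_add_two_pi (γ θ : ℝ) : betaArctan γ (θ + 2 * π) = betaArctan γ θ := by
  simp only [betaArctan, sin_add_two_pi, cos_add_two_pi]

lemma abs_betaArctan_lt (γ θ : ℝ) : |betaArctan γ θ| < π / 2 :=
  abs_lt.2 ⟨neg_pi_div_two_lt_arctan _, arctan_lt_pi_div_two _⟩

lemma betaStr_eq_betaArctan {γ : ℝ} (hγ : 0 < γ) : betaStr γ = betaArctan γ := by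
  funext θ
  rw [betaStr, intervalIntegral.integral_eq_sub_of_hasDerivAt
    (fun s _ => hasDerivAt_betaArctan hγ s)
    (((continuous_one_div_gell hγ).sub continuous_const).intervalIntegrable 0 θ)]
  simp [betaArctan]

lemma hasDerivAt_betaStr {γ : ℝ} (hγ : 0 < γ) (θ : ℝ) :
    HasDerivAt (betaStr γ) (1 / gell γ θ - 1) θ :=
  betaStr_eq_betaArctan hγ ▸ hasDerivAt_betaArctan hγ θ

lemma hasDerivAt_add_betaStr {γ : ℝ} (hγ : 0 < γ) (θ : ℝ) :
    HasDerivAt (fun θ => θ + betaStr γ θ) (1 / gell γ θ) θ := by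
  simpa using (hasDerivAt_id' θ).fun_add (hasDerivAt_betaStr hγ θ)

lemma integral_comp_add_betaStr {γ : ℝ} (hγ : 0 < γ) {f : ℝ → ℝ} (hf : Continuous f)
    (a b : ℝ) :
    ∫ θ in a..b, f (θ + betaStr γ θ) * (1 + deriv (betaStr γ) θ) ^ 2 * gell γ θ =
      ∫ y in (a + betaStr γ a)..(b + betaStr γ b), f y := by
  rw [← intervalIntegral.integral_comp_mul_deriv (fun θ _ => hasDerivAt_add_betaStr hγ θ)
    (continuous_one_div_gell hγ).continuousOn hf]
  refine intervalIntegral.integral_congr fun θ _ => ?_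
  have hg := (gell_pos hγ θ).ne'
  simp only [(hasDerivAt_betaStr hγ θ).deriv, Function.comp_apply]
  field_simp
  ring

/-- Symplectic rectification of the quadratic angular momentum (Lemma 6.1, part 2). -/
theorem rectification (γ : ℝ) (hγ : 1 ≤ γ) :
    -- θ ↦ θ + β(θ) is a strictly increasing C^∞ diffeomorphism of ℝ
    StrictMono (fun θ => θ + betaStr γ θ) ∧
    ContDiff ℝ (⊤ : ℕ∞) (fun θ : ℝ => θ + betaStr γ θ) ∧
    Function.Bijective (fun θ : ℝ => θ + betaStr γ θ) ∧
    -- it commutes with the translation by 2π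
    (∀ θ : ℝ, (θ + 2 * π) + betaStr γ (θ + 2 * π) = (θ + betaStr γ θ) + 2 * π) ∧
    -- change of variables for the quadratic angular momentum
    (∀ q : ℝ → ℝ, Continuous q → (∀ y, q (y + 2 * π) = q y) →
      (∫ θ in (0:ℝ)..(2 * π),
          q (θ + betaStr γ θ) ^ 2 * (1 + deriv (betaStr γ) θ) ^ 2 * gell γ θ)
        = ∫ y in (0:ℝ)..(2 * π), q y ^ 2) := by
  have hγ0 : 0 < γ := zero_lt_one.trans_le hγ
  have hβ := betaStr_eq_betaArctan hγ0
  have hmono : StrictMono fun θ => θ + betaStr γ θ :=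
    strictMono_of_hasDerivAt_pos (hasDerivAt_add_betaStr hγ0)
      fun θ => one_div_pos.2 (gell_pos hγ0 θ)
  have hsmooth : ContDiff ℝ (⊤ : ℕ∞) fun θ : ℝ => θ + betaStr γ θ := by
    rw [hβ]; exact contDiff_id.add (contDiff_betaArctan hγ0)
  have hsurj : Function.Surjective fun θ : ℝ => θ + betaStr γ θ :=
    surjective_of_continuous_of_abs_sub_le hsmooth.continuous (C := π / 2) fun θ => by
      simpa [hβ] using (abs_betaArctan_lt γ θ).le
  have hper : ∀ θ, betaStr γ (θ + 2 * π) = betaStr γ θ := fun θ => by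
    rw [hβ, betaArctan_add_two_pi]
  refine ⟨hmono, hsmooth, ⟨hmono.injective, hsurj⟩, fun θ => by rw [hper]; ring, ?_⟩
  intro q hq _
  have hβ0 : betaStr γ 0 = 0 := intervalIntegral.integral_same
  have hβ2π : betaStr γ (2 * π) = 0 := by simpa [hβ0] using hper 0
  simpa [hβ0, hβ2π] using integral_comp_add_betaStr hγ0 (hq.pow 2) 0 (2 * π)
end
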